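/- arXiv:1407.4713 — 5 statements merged into one kernel-verified Lean document; each statement's English description precedes it below -/
import Mathlib

section
/- Let A be a unital C*-algebra. Then A fails to have Invariant Basis Number if and only if there exist an integer k ≥ 1, an integer r ≥ 1, a projection p in M_r(A), and an r × (r + k) matrix v over A such that v * vᴴ = p and vᴴ * v is the block-diagonal (r+k) × (r+k) matrix diag(p, 1_k). (This is the matrix form of the statement that A lacks IBN if and only if the class [1_A]₀ has finite order in K₀(A).) -/
open Matrix

/-- An `m × n` matrix `U` over a `*`-ring is a *rectangular unitary* if
`U * Uᴴ = 1` and `Uᴴ * U = 1`. -/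
def IsRectangularUnitary {A : Type*} [Ring A] [StarRing A] {m n : ℕ}
    (U : Matrix (Fin m) (Fin n) A) : Prop :=
  U * Uᴴ = 1 ∧ Uᴴ * U = 1

/-- A unital C*-algebra has *Invariant Basis Number* if every rectangular
unitary over it is square. -/
def HasIBN (A : Type*) [Ring A] [StarRing A] : Prop :=
  ∀ m n : ℕ, (∃ U : Matrix (Fin m) (Fin n) A, IsRectangularUnitary U) → m = n

/-!
A rectangular unitary of size `r × (r + k)` with `k ≥ 1` is itself a valid `v`, with `p = 1`.
Conversely, given `p` and `v`, the partial isometry `w = (1 - p, 0)` has source and range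
projections complementary to those of `v`, so `v + w` is an `r × (r + k)` unitary. The only
analytic input is that `x * xᴴ = 0` forces `x = 0` over a C*-algebra: it kills the cross terms
`wᴴ * v` and `v * wᴴ`.
-/

section StarRing

variable {A : Type*} [Ring A] [StarRing A] {m n : Type*}

theorem IsRectangularUnitary.conjTranspose {m n : ℕ} {U : Matrix (Fin m) (Fin n) A}
    (hU : IsRectangularUnitary U) : IsRectangularUnitary Uᴴ := by
  rw [IsRectangularUnitary, conjTranspose_conjTranspose]
  exact hU.symm

theorem Matrix.reindex_mul_conjTranspose_eq_one {m' n' : Type*} [Fintype m] [Fintype n]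
    [DecidableEq m] [DecidableEq n] [Fintype m'] [Fintype n'] [DecidableEq m'] [DecidableEq n']
    {U : Matrix m n A} (e₁ : m ≃ m') (e₂ : n ≃ n') (h₁ : U * Uᴴ = 1) (h₂ : Uᴴ * U = 1) :
    reindex e₁ e₂ U * (reindex e₁ e₂ U)ᴴ = 1 ∧ (reindex e₁ e₂ U)ᴴ * reindex e₁ e₂ U = 1 := by
  simp only [reindex_apply, conjTranspose_submatrix, submatrix_mul_equiv, h₁, h₂,
    submatrix_one_equiv, and_self]

theorem HasIBN.card_eq [Fintype m] [Fintype n] [DecidableEq m] [DecidableEq n]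
    (hA : HasIBN A) {U : Matrix m n A} (h₁ : U * Uᴴ = 1) (h₂ : Uᴴ * U = 1) :
    Fintype.card m = Fintype.card n :=
  hA _ _ ⟨_, reindex_mul_conjTranspose_eq_one (Fintype.equivFin m) (Fintype.equivFin n) h₁ h₂⟩

theorem exists_mul_conjTranspose_eq_one_of_not_hasIBN (hA : ¬ HasIBN A) :
    ∃ r k : ℕ, 1 ≤ k ∧ ∃ U : Matrix (Fin r) (Fin r ⊕ Fin k) A, U * Uᴴ = 1 ∧ Uᴴ * U = 1 := by
  suffices ∀ r n : ℕ, r < n → ∀ U : Matrix (Fin r) (Fin n) A, IsRectangularUnitary U →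
      ∃ k, 1 ≤ k ∧ ∃ U : Matrix (Fin r) (Fin r ⊕ Fin k) A, U * Uᴴ = 1 ∧ Uᴴ * U = 1 by
    simp only [HasIBN, not_forall] at hA
    obtain ⟨m, n, ⟨U, hU⟩, hmn⟩ := hA
    rcases lt_or_gt_of_ne hmn with hlt | hlt
    · exact ⟨m, this m n hlt U hU⟩
    · exact ⟨n, this n m hlt Uᴴ hU.conjTranspose⟩
  intro r n hrn U hU
  obtain ⟨k, rfl⟩ := Nat.exists_eq_add_of_lt hrn
  exact ⟨k + 1, by omega, _, reindex_mul_conjTranspose_eq_one (Equiv.refl _)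
    finSumFinEquiv.symm hU.1 hU.2⟩

theorem nonempty_of_conjTranspose_mul_self_eq_one [Fintype m] [DecidableEq n] [Nontrivial A]
    [Nonempty n] {U : Matrix m n A} (hU : Uᴴ * U = 1) : Nonempty m := by
  by_contra hm
  rw [not_nonempty_iff] at hm
  obtain ⟨j⟩ := ‹Nonempty n›
  have hjj := congrFun (congrFun hU j) j
  simp only [mul_apply, Finset.univ_eq_empty, Finset.sum_empty, one_apply_eq] at hjj
  exact zero_ne_one hjj

theorem add_mul_conjTranspose_add_of_mul_conjTranspose_eq_zero [Fintype n] {v w : Matrix m n A}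
    (h : v * wᴴ = 0) : (v + w) * (v + w)ᴴ = v * vᴴ + w * wᴴ := by
  have h' : w * vᴴ = 0 := by rw [← conjTranspose_conjTranspose w, ← conjTranspose_mul, h,
    conjTranspose_zero]
  rw [conjTranspose_add, Matrix.add_mul, Matrix.mul_add, Matrix.mul_add, h, h', add_zero,
    zero_add]

end StarRing

section CStarAlgebra

variable {A : Type*} [NormedRing A] [StarRing A] [CStarRing A] [CompleteSpace A]
  [NormedAlgebra ℂ A] [StarModule ℂ A] {m n : Type*} [Fintype n]

theorem Matrix.eq_zero_of_mul_conjTranspose_self_eq_zero {x : Matrix m n A}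
    (h : x * xᴴ = 0) : x = 0 := by
  let _ : CStarAlgebra A := {}
  let _ : PartialOrder A := CStarAlgebra.spectralOrder A
  let _ : StarOrderedRing A := CStarAlgebra.spectralOrderedRing A
  ext i j
  have hdiag : ∑ l, x i l * star (x i l) = 0 := by
    simpa [mul_apply, conjTranspose_apply] using congrFun (congrFun h i) i
  have hterm := (Finset.sum_eq_zero_iff_of_nonneg fun l _ ↦ mul_star_self_nonneg (x i l)).mp
    hdiag j (Finset.mem_univ j)
  exact (CStarRing.mul_star_self_eq_zero_iff (x i j)).mp hterm

theorem Matrix.conjTranspose_mul_eq_zero_of_mul_conjTranspose_add_eq_one [Fintype m]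
    [DecidableEq m] {v w : Matrix m n A} (h : v * vᴴ + w * wᴴ = 1)
    (hw : IsIdempotentElem (wᴴ * w)) :
    wᴴ * v = 0 := by
  apply eq_zero_of_mul_conjTranspose_self_eq_zero
  calc wᴴ * v * (wᴴ * v)ᴴ = wᴴ * (v * vᴴ) * w := by
        simp only [conjTranspose_mul, conjTranspose_conjTranspose, Matrix.mul_assoc]
    _ = wᴴ * w - wᴴ * w * (wᴴ * w) := by
        rw [eq_sub_of_add_eq h, Matrix.mul_sub, Matrix.sub_mul, Matrix.mul_one,
          Matrix.mul_assoc, Matrix.mul_assoc, Matrix.mul_assoc]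
    _ = 0 := by rw [hw.eq, sub_self]

theorem Matrix.add_isUnitary_of_isIdempotentElem [Fintype m] [DecidableEq m] [DecidableEq n]
    {v w : Matrix m n A} (hp : IsIdempotentElem (v * vᴴ)) (hq : IsIdempotentElem (vᴴ * v))
    (h₁ : v * vᴴ + w * wᴴ = 1) (h₂ : vᴴ * v + wᴴ * w = 1) :
    (v + w) * (v + w)ᴴ = 1 ∧ (v + w)ᴴ * (v + w) = 1 := by
  have hwv : wᴴ * v = 0 :=
    conjTranspose_mul_eq_zero_of_mul_conjTranspose_add_eq_one h₁
      (eq_sub_of_add_eq' h₂ ▸ hq.one_sub)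
  have hvw : w * vᴴ = 0 := by
    simpa using conjTranspose_mul_eq_zero_of_mul_conjTranspose_add_eq_one (v := vᴴ) (w := wᴴ)
      (by simpa using h₂) (by simpa using eq_sub_of_add_eq' h₁ ▸ hp.one_sub)
  constructor
  · rw [add_comm v, add_mul_conjTranspose_add_of_mul_conjTranspose_eq_zero hvw, add_comm, h₁]
  · have := add_mul_conjTranspose_add_of_mul_conjTranspose_eq_zero (v := vᴴ) (w := wᴴ)
      (by simpa using (congrArg conjTranspose hwv))
    simpa [h₂] using this

theorem exists_unitary_of_conjTranspose_mul_eq_fromBlocks [Fintype m] [DecidableEq m]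
    [DecidableEq n] {p : Matrix m m A} {v : Matrix m (m ⊕ n) A} (hp : pᴴ = p)
    (hp₂ : IsIdempotentElem p) (hv₁ : v * vᴴ = p) (hv₂ : vᴴ * v = fromBlocks p 0 0 1) :
    ∃ U : Matrix m (m ⊕ n) A, U * Uᴴ = 1 ∧ Uᴴ * U = 1 := by
  have hq : (1 - p)ᴴ = 1 - p := by rw [conjTranspose_sub, conjTranspose_one, hp]
  have hq₂ : (1 - p) * (1 - p) = 1 - p := hp₂.one_sub.eq
  refine ⟨v + fromCols (1 - p) 0, add_isUnitary_of_isIdempotentElem (hv₁ ▸ hp₂) ?_ ?_ ?_⟩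
  · rw [hv₂, IsIdempotentElem, fromBlocks_multiply, hp₂.eq]
    simp
  · rw [hv₁, conjTranspose_fromCols_eq_fromRows_conjTranspose, fromCols_mul_fromRows, hq, hq₂]
    simp
  · rw [hv₂, conjTranspose_fromCols_eq_fromRows_conjTranspose, fromRows_mul_fromCols, hq, hq₂,
      fromBlocks_add, ← fromBlocks_one]
    simp

end CStarAlgebra

/-- A unital C*-algebra `A` fails to have Invariant Basis Number if and only if
there are `k, r ≥ 1`, a projection `p ∈ M_r(A)`, and an `r × (r + k)` matrix `v`
over `A` with `v * vᴴ = p` and `vᴴ * v = diag(p, 1_k)`.  (This is the matrix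
form of the statement that `A` lacks IBN iff `[1_A]₀` has finite order in
`K₀(A)`.) -/
theorem not_hasIBN_iff_exists_projection_stably_equiv_shift
    (A : Type*) [NormedRing A] [StarRing A] [CStarRing A] [CompleteSpace A]
    [NormedAlgebra ℂ A] [StarModule ℂ A] :
    ¬ HasIBN A ↔
      ∃ (k r : ℕ), 1 ≤ k ∧ 1 ≤ r ∧
        ∃ (p : Matrix (Fin r) (Fin r) A)
          (v : Matrix (Fin r) (Fin r ⊕ Fin k) A),
          pᴴ = p ∧ p * p = p ∧
          v * vᴴ = p ∧ vᴴ * v = Matrix.fromBlocks p 0 0 1 := by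
  constructor
  · intro hA
    obtain ⟨r, k, hk, U, hU₁, hU₂⟩ := exists_mul_conjTranspose_eq_one_of_not_hasIBN hA
    rcases subsingleton_or_nontrivial A with _ | _
    · exact ⟨1, 1, le_rfl, le_rfl, 0, 0, Subsingleton.elim _ _, Subsingleton.elim _ _,
        Subsingleton.elim _ _, Subsingleton.elim _ _⟩
    have : Nonempty (Fin r ⊕ Fin k) := ⟨.inr ⟨0, hk⟩⟩
    have hr : 1 ≤ r := Fin.pos_iff_nonempty.mpr (nonempty_of_conjTranspose_mul_self_eq_one hU₂)
    exact ⟨k, r, hk, hr, 1, U, conjTranspose_one, mul_one 1, hU₁, by rw [fromBlocks_one, hU₂]⟩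
  · rintro ⟨k, r, hk, -, p, v, hp, hp₂, hv₁, hv₂⟩ hA
    obtain ⟨U, hU₁, hU₂⟩ := exists_unitary_of_conjTranspose_mul_eq_fromBlocks hp hp₂ hv₁ hv₂
    have := hA.card_eq hU₁ hU₂
    simp only [Fintype.card_fin, Fintype.card_sum] at this
    omega
end

section
/- Let A be a unital C*-algebra, let r ≥ 1 and k ≥ 1, and let p be a projection in M_r(A). If there is an r × (r + k) matrix v over A with v * vᴴ = p and vᴴ * v = diag(p, 1_k) (block-diagonal), then there exists an r × (r + k) rectangular unitary over A; in particular A does not have Invariant Basis Number. -/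
open Matrix

/-! `vᴴ * v = diag(p, 1)` is a projection, so in a C*-algebra `v` is a partial isometry,
`v * vᴴ * v = v`; hence `p * v = v` and `v * diag(p, 1) = v`. With `ι = [1 0]` the inclusion of the
first block of columns, `u = v + (1 - p) * ι` has no cross terms:
`u * uᴴ = p + (1 - p) = 1` and `uᴴ * u = diag(p, 1) + diag(1 - p, 0) = 1`. -/

namespace Matrix

section CStarAlgebra

variable {A : Type*} [NormedRing A] [StarRing A] [CStarRing A] [CompleteSpace A]
  [NormedAlgebra ℂ A] [StarModule ℂ A] {m n : Type*} [Fintype m]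

theorem eq_zero_of_conjTranspose_mul_self_eq_zero {x : Matrix m n A} (h : xᴴ * x = 0) :
    x = 0 := by
  let _ : CStarAlgebra A := { }
  let _ := CStarAlgebra.spectralOrder A
  have _ := CStarAlgebra.spectralOrderedRing A
  ext i j
  have hjj : ∑ i, star (x i j) * x i j = 0 := by
    simpa only [mul_apply, conjTranspose_apply, zero_apply] using congrFun (congrFun h j) j
  have hij := (Finset.sum_eq_zero_iff_of_nonneg fun i _ ↦ star_mul_self_nonneg (x i j)).mp hjj i
    (Finset.mem_univ i)
  exact CStarRing.star_mul_self_eq_zero_iff (x i j) |>.mp hij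

theorem mul_conjTranspose_mul_self_of_isIdempotentElem [Fintype n] {x : Matrix m n A}
    (h : IsIdempotentElem (xᴴ * x)) : x * xᴴ * x = x := by
  refine (sub_eq_zero.mp (eq_zero_of_conjTranspose_mul_self_eq_zero ?_)).symm
  simp only [IsIdempotentElem, Matrix.mul_assoc] at h
  simp only [conjTranspose_sub, conjTranspose_mul, conjTranspose_conjTranspose, Matrix.sub_mul,
    Matrix.mul_sub, Matrix.mul_assoc, h, sub_self]

end CStarAlgebra

section StarRing

variable {R : Type*} [Ring R] [StarRing R] {m n : Type*} [Fintype m] [DecidableEq m]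
  [Fintype n] [DecidableEq n]

theorem exists_rectangular_unitary_of_conjTranspose_mul_eq_fromBlocks {p : Matrix m m R}
    {v : Matrix m (m ⊕ n) R} (hp : pᴴ = p) (hpp : p * p = p) (hv : v * vᴴ = p)
    (hv' : vᴴ * v = fromBlocks p 0 0 1) (hiso : v * vᴴ * v = v) :
    ∃ u : Matrix m (m ⊕ n) R, u * uᴴ = 1 ∧ uᴴ * u = 1 := by
  set ι : Matrix m (m ⊕ n) R := fromCols 1 0
  set q := 1 - p
  have hq : qᴴ = q := by rw [conjTranspose_sub, hp, conjTranspose_one]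
  have hqq : q * q = q := by
    simp only [q, Matrix.mul_sub, Matrix.sub_mul, Matrix.mul_one, Matrix.one_mul, hpp, sub_self,
      sub_zero]
  have hqv : q * v = 0 := by rw [Matrix.sub_mul, Matrix.one_mul, ← hv, hiso, sub_self]
  have hιι : ι * ιᴴ = 1 := by
    simp [ι, conjTranspose_fromCols_eq_fromRows_conjTranspose, fromCols_mul_fromRows]
  have hιqι : ιᴴ * q * ι = fromBlocks q 0 0 0 := by
    rw [conjTranspose_fromCols_eq_fromRows_conjTranspose, fromRows_mul, fromRows_mul_fromCols]
    simp
  have hvιq : v * ιᴴ * q = 0 := by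
    have : ιᴴ * p = vᴴ * v * ιᴴ := by
      simp [ι, hv', conjTranspose_fromCols_eq_fromRows_conjTranspose, fromBlocks_mul_fromRows]
    rw [Matrix.mul_sub, Matrix.mul_one, Matrix.mul_assoc, this, ← Matrix.mul_assoc,
      ← Matrix.mul_assoc, hiso, sub_self]
  refine ⟨v + q * ι, ?_, ?_⟩
  · calc (v + q * ι) * (v + q * ι)ᴴ
        = v * vᴴ + v * ιᴴ * q + (v * ιᴴ * q)ᴴ + q * (ι * ιᴴ) * q := by
          simp only [conjTranspose_add, conjTranspose_mul, hq, Matrix.add_mul, Matrix.mul_add,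
            conjTranspose_conjTranspose, Matrix.mul_assoc]
          abel
      _ = 1 := by
          rw [hv, hvιq, hιι, conjTranspose_zero, Matrix.mul_one, hqq, add_zero, add_zero,
            add_sub_cancel]
  · calc (v + q * ι)ᴴ * (v + q * ι)
        = vᴴ * v + (q * v)ᴴ * ι + ιᴴ * (q * v) + ιᴴ * (q * q) * ι := by
          simp only [conjTranspose_add, conjTranspose_mul, hq, Matrix.add_mul, Matrix.mul_add,
            Matrix.mul_assoc]
          abel
      _ = 1 := by
          rw [hv', hqv, hqq, hιqι, conjTranspose_zero, Matrix.zero_mul, Matrix.mul_zero, add_zero,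
            add_zero, fromBlocks_add]
          simp [q]

end StarRing

end Matrix

theorem isRectangularUnitary_submatrix {R : Type*} [Ring R] [StarRing R] {m n : Type*}
    [Fintype m] [DecidableEq m] [Fintype n] [DecidableEq n] {a b : ℕ} {u : Matrix m n R}
    (h₁ : u * uᴴ = 1) (h₂ : uᴴ * u = 1) (e₁ : Fin a ≃ m) (e₂ : Fin b ≃ n) :
    IsRectangularUnitary (u.submatrix e₁ e₂) := by
  constructor
  · rw [conjTranspose_submatrix, submatrix_mul_equiv, h₁, submatrix_one_equiv]
  · rw [conjTranspose_submatrix, submatrix_mul_equiv, h₂, submatrix_one_equiv]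

theorem exists_rectangularUnitary_of_projection_stably_equiv_shift_general
    (A : Type*) [NormedRing A] [StarRing A] [CStarRing A] [CompleteSpace A]
    [NormedAlgebra ℂ A] [StarModule ℂ A]
    (r k : ℕ) (hk : 1 ≤ k)
    (p : Matrix (Fin r) (Fin r) A)
    (hp_star : pᴴ = p) (hp_idem : p * p = p)
    (v : Matrix (Fin r) (Fin r ⊕ Fin k) A)
    (hv₁ : v * vᴴ = p) (hv₂ : vᴴ * v = Matrix.fromBlocks p 0 0 1) :
    (∃ U : Matrix (Fin r) (Fin (r + k)) A, IsRectangularUnitary U) ∧ ¬ HasIBN A := by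
  have hproj : IsIdempotentElem (vᴴ * v) := by
    rw [IsIdempotentElem, hv₂, fromBlocks_multiply]
    simp [hp_idem]
  obtain ⟨u, hu₁, hu₂⟩ := exists_rectangular_unitary_of_conjTranspose_mul_eq_fromBlocks hp_star
    hp_idem hv₁ hv₂ (mul_conjTranspose_mul_self_of_isIdempotentElem hproj)
  have hU := isRectangularUnitary_submatrix hu₁ hu₂ (Equiv.refl _) finSumFinEquiv.symm
  refine ⟨⟨_, hU⟩, fun hIBN ↦ ?_⟩
  have : r = r + k := hIBN r (r + k) ⟨_, hU⟩
  omega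

/-- If `r, k ≥ 1`, `p` is a projection in `M_r(A)`, and `v` is an `r × (r + k)`
matrix over `A` with `v * vᴴ = p` and `vᴴ * v = diag(p, 1_k)`, then there is an
`r × (r + k)` rectangular unitary over `A`; in particular `A` does not have
Invariant Basis Number. -/
theorem exists_rectangularUnitary_of_projection_stably_equiv_shift
    (A : Type*) [NormedRing A] [StarRing A] [CStarRing A] [CompleteSpace A]
    [NormedAlgebra ℂ A] [StarModule ℂ A]
    (r k : ℕ) (hr : 1 ≤ r) (hk : 1 ≤ k)
    (p : Matrix (Fin r) (Fin r) A)
    (hp_star : pᴴ = p) (hp_idem : p * p = p)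
    (v : Matrix (Fin r) (Fin r ⊕ Fin k) A)
    (hv₁ : v * vᴴ = p) (hv₂ : vᴴ * v = Matrix.fromBlocks p 0 0 1) :
    (∃ U : Matrix (Fin r) (Fin (r + k)) A, IsRectangularUnitary U) ∧ ¬ HasIBN A :=
  exists_rectangularUnitary_of_projection_stably_equiv_shift_general A r k hk p hp_star hp_idem v
    hv₁ hv₂
end

section
/- Let A be a unital C*-algebra and N, K ≥ 1. If there exists an N × (N + K) rectangular unitary over A, then for every n ≥ N and every j ≥ 0 there exists an n × (n + jK) rectangular unitary over A. -/
open Matrix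

lemma IsRectangularUnitary.mul {A : Type*} [Ring A] [StarRing A] {m n p : ℕ}
    {U : Matrix (Fin m) (Fin n) A} {V : Matrix (Fin n) (Fin p) A}
    (hU : IsRectangularUnitary U) (hV : IsRectangularUnitary V) :
    IsRectangularUnitary (U * V) := by
  constructor
  · rw [conjTranspose_mul, Matrix.mul_assoc, ← Matrix.mul_assoc V, hV.1,
      Matrix.one_mul, hU.1]
  · rw [conjTranspose_mul, Matrix.mul_assoc, ← Matrix.mul_assoc Uᴴ, hU.2,
      Matrix.one_mul, hV.2]

lemma IsRectangularUnitary.reindex {A : Type*} [Ring A] [StarRing A]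
    {m n m' n' : ℕ} (e : Fin m ≃ Fin m') (f : Fin n ≃ Fin n')
    {U : Matrix (Fin m) (Fin n) A} (hU : IsRectangularUnitary U) :
    IsRectangularUnitary (Matrix.reindex e f U) := by
  constructor
  · have : (Matrix.reindex e f U) * (Matrix.reindex e f U)ᴴ
        = Matrix.reindex e e (U * Uᴴ) := by
      simp [Matrix.reindex_apply, conjTranspose_submatrix,
        Matrix.submatrix_mul_equiv]
    rw [this, hU.1]
    simp [Matrix.reindex_apply, Matrix.submatrix_one_equiv]
  · have : (Matrix.reindex e f U)ᴴ * (Matrix.reindex e f U)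
        = Matrix.reindex f f (Uᴴ * U) := by
      simp [Matrix.reindex_apply, conjTranspose_submatrix,
        Matrix.submatrix_mul_equiv]
    rw [this, hU.2]
    simp [Matrix.reindex_apply, Matrix.submatrix_one_equiv]

lemma IsRectangularUnitary.one_block {A : Type*} [Ring A] [StarRing A]
    {m n : ℕ} (d : ℕ) {U : Matrix (Fin m) (Fin n) A}
    (hU : IsRectangularUnitary U) :
    IsRectangularUnitary
      (Matrix.reindex finSumFinEquiv finSumFinEquiv
        (Matrix.fromBlocks (1 : Matrix (Fin d) (Fin d) A) 0 0 U)) := by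
  have hb : (Matrix.fromBlocks (1 : Matrix (Fin d) (Fin d) A) 0 0 U)
      * (Matrix.fromBlocks (1 : Matrix (Fin d) (Fin d) A) 0 0 U)ᴴ = 1 := by
    simp [Matrix.fromBlocks_conjTranspose, Matrix.fromBlocks_multiply, hU.1,
      ← Matrix.fromBlocks_one]
  have hb' : (Matrix.fromBlocks (1 : Matrix (Fin d) (Fin d) A) 0 0 U)ᴴ
      * (Matrix.fromBlocks (1 : Matrix (Fin d) (Fin d) A) 0 0 U) = 1 := by
    simp [Matrix.fromBlocks_conjTranspose, Matrix.fromBlocks_multiply, hU.2,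
      ← Matrix.fromBlocks_one]
  constructor
  · have : (Matrix.reindex finSumFinEquiv finSumFinEquiv
        (Matrix.fromBlocks (1 : Matrix (Fin d) (Fin d) A) 0 0 U))
        * (Matrix.reindex finSumFinEquiv finSumFinEquiv
        (Matrix.fromBlocks (1 : Matrix (Fin d) (Fin d) A) 0 0 U))ᴴ
        = Matrix.reindex finSumFinEquiv finSumFinEquiv
          ((Matrix.fromBlocks (1 : Matrix (Fin d) (Fin d) A) 0 0 U)
            * (Matrix.fromBlocks (1 : Matrix (Fin d) (Fin d) A) 0 0 U)ᴴ) := by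
      simp [Matrix.reindex_apply, conjTranspose_submatrix,
        Matrix.submatrix_mul_equiv]
    rw [this, hb]
    simp [Matrix.reindex_apply, Matrix.submatrix_one_equiv]
  · have : (Matrix.reindex finSumFinEquiv finSumFinEquiv
        (Matrix.fromBlocks (1 : Matrix (Fin d) (Fin d) A) 0 0 U))ᴴ
        * (Matrix.reindex finSumFinEquiv finSumFinEquiv
        (Matrix.fromBlocks (1 : Matrix (Fin d) (Fin d) A) 0 0 U))
        = Matrix.reindex finSumFinEquiv finSumFinEquiv
          ((Matrix.fromBlocks (1 : Matrix (Fin d) (Fin d) A) 0 0 U)ᴴ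
            * (Matrix.fromBlocks (1 : Matrix (Fin d) (Fin d) A) 0 0 U)) := by
      simp [Matrix.reindex_apply, conjTranspose_submatrix,
        Matrix.submatrix_mul_equiv]
    rw [this, hb']
    simp [Matrix.reindex_apply, Matrix.submatrix_one_equiv]

/-- If there is an `N × (N + K)` rectangular unitary over the unital
C*-algebra `A` (with `N, K ≥ 1`), then for every `n ≥ N` and every `j ≥ 0`
there is an `n × (n + j·K)` rectangular unitary over `A`. -/
theorem exists_rectangularUnitary_add_mul
    (A : Type*) [NormedRing A] [StarRing A] [CStarRing A] [CompleteSpace A]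
    [NormedAlgebra ℂ A] [StarModule ℂ A]
    (N K : ℕ) (hN : 1 ≤ N) (hK : 1 ≤ K)
    (h : ∃ U : Matrix (Fin N) (Fin (N + K)) A, IsRectangularUnitary U) :
    ∀ n : ℕ, N ≤ n → ∀ j : ℕ,
      ∃ U : Matrix (Fin n) (Fin (n + j * K)) A, IsRectangularUnitary U := by
  obtain ⟨U, hU⟩ := h
  -- step: for any m ≥ N there is an m × (m + K) rectangular unitary
  have step : ∀ m : ℕ, N ≤ m →
      ∃ V : Matrix (Fin m) (Fin (m + K)) A, IsRectangularUnitary V := by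
    intro m hm
    obtain ⟨d, rfl⟩ := Nat.exists_eq_add_of_le hm
    have h1 := hU.one_block (A := A) d
    have h2 := h1.reindex (finCongr (by omega) : Fin (d + N) ≃ Fin (N + d))
      (finCongr (by omega) : Fin (d + (N + K)) ≃ Fin (N + d + K))
    exact ⟨_, h2⟩
  intro n hn j
  induction j with
  | zero =>
      refine ⟨Matrix.reindex (Equiv.refl _) (finCongr (by omega)) (1 : Matrix (Fin n) (Fin n) A), ?_⟩
      exact IsRectangularUnitary.reindex _ _ ⟨by simp, by simp⟩
  | succ j ih =>
      obtain ⟨W, hW⟩ := ih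
      obtain ⟨V, hV⟩ := step (n + j * K) (le_trans hn (Nat.le_add_right _ _))
      refine ⟨Matrix.reindex (Equiv.refl _) (finCongr (by ring)) (W * V), ?_⟩
      exact (hW.mul hV).reindex _ _
end

section
/- Let A be a unital C*-algebra without Invariant Basis Number, with Basis Type (N, K). Then for all n, m ≥ 1, there exists an n × m rectangular unitary over A if and only if either n = m, or both n ≥ N and m ≥ N and n ≡ m (mod K). -/
open Matrix

/-- `(N, K)` is the *Basis Type* of `A`: `N` is the least positive integer such
that there is an `N × m` rectangular unitary over `A` for some `m ≠ N`, and `K`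
is the least positive integer such that there is an `N × (N + K)` rectangular
unitary over `A`. -/
def IsBasisTypeOf (A : Type*) [Ring A] [StarRing A] (N K : ℕ) : Prop :=
  (0 < N ∧ (∃ m : ℕ, m ≠ N ∧ ∃ U : Matrix (Fin N) (Fin m) A, IsRectangularUnitary U) ∧
    ∀ n : ℕ, 0 < n →
      (∃ m : ℕ, m ≠ n ∧ ∃ U : Matrix (Fin n) (Fin m) A, IsRectangularUnitary U) → N ≤ n) ∧
  (0 < K ∧ (∃ U : Matrix (Fin N) (Fin (N + K)) A, IsRectangularUnitary U) ∧
    ∀ k : ℕ, 0 < k →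
      (∃ U : Matrix (Fin N) (Fin (N + k)) A, IsRectangularUnitary U) → K ≤ k)

section RU
variable {A : Type*} [Ring A] [StarRing A]

/-- The relation "there exists an `n × m` rectangular unitary over `A`". -/
def RURel (A : Type*) [Ring A] [StarRing A] (n m : ℕ) : Prop :=
  ∃ U : Matrix (Fin n) (Fin m) A, IsRectangularUnitary U

lemma RURel.refl (n : ℕ) : RURel A n n :=
  ⟨1, by simp [IsRectangularUnitary]⟩

lemma RURel.symm {n m : ℕ} (h : RURel A n m) : RURel A m n := by
  obtain ⟨U, h1, h2⟩ := h
  exact ⟨Uᴴ, by rwa [conjTranspose_conjTranspose], by rwa [conjTranspose_conjTranspose]⟩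

lemma RURel.trans {n m k : ℕ} (h1 : RURel A n m) (h2 : RURel A m k) : RURel A n k := by
  obtain ⟨U, hU1, hU2⟩ := h1
  obtain ⟨V, hV1, hV2⟩ := h2
  refine ⟨U * V, ?_, ?_⟩
  · rw [conjTranspose_mul, Matrix.mul_assoc, ← Matrix.mul_assoc V, hV1, Matrix.one_mul, hU1]
  · rw [conjTranspose_mul, Matrix.mul_assoc, ← Matrix.mul_assoc Uᴴ, hU2, Matrix.one_mul, hV2]

lemma RURel.add {n m p q : ℕ} (h1 : RURel A n m) (h2 : RURel A p q) :
    RURel A (n + p) (m + q) := by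
  obtain ⟨U, hU1, hU2⟩ := h1
  obtain ⟨V, hV1, hV2⟩ := h2
  refine ⟨(Matrix.reindex finSumFinEquiv finSumFinEquiv) (Matrix.fromBlocks U 0 0 V), ?_, ?_⟩
  · simp [Matrix.reindex_apply, Matrix.conjTranspose_submatrix, Matrix.submatrix_mul_equiv,
      Matrix.fromBlocks_conjTranspose, Matrix.fromBlocks_multiply, hU1, hV1,
      Matrix.fromBlocks_one, Matrix.submatrix_one_equiv]
  · simp [Matrix.reindex_apply, Matrix.conjTranspose_submatrix, Matrix.submatrix_mul_equiv,
      Matrix.fromBlocks_conjTranspose, Matrix.fromBlocks_multiply, hU2, hV2,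
      Matrix.fromBlocks_one, Matrix.submatrix_one_equiv]

lemma RURel.shift {N K : ℕ} (hK : RURel A N (N + K)) {s : ℕ} (hs : N ≤ s) :
    RURel A s (s + K) := by
  have h := hK.add (RURel.refl (A := A) (s - N))
  rwa [show N + (s - N) = s by omega, show N + K + (s - N) = s + K by omega] at h

lemma RURel.shift_mul {N K : ℕ} (hK : RURel A N (N + K)) {s : ℕ} (hs : N ≤ s) (t : ℕ) :
    RURel A s (s + t * K) := by
  induction t with
  | zero => simpa using RURel.refl (A := A) s
  | succ t ih =>
    have h2 : RURel A (s + t * K) (s + t * K + K) := hK.shift (by omega)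
    have := ih.trans h2
    rwa [show s + t * K + K = s + (t + 1) * K by ring] at this

lemma RURel.key {N K : ℕ} (hK : RURel A N (N + K)) (hKpos : 0 < K)
    (hmin : ∀ k : ℕ, 0 < k → RURel A N (N + k) → K ≤ k)
    {n d : ℕ} (hn : N ≤ n) (h : RURel A n (n + d)) : K ∣ d := by
  by_contra hdvd
  set q := d / K with hq
  set r := d % K with hr
  have hrpos : 0 < r := by
    rcases Nat.eq_zero_or_pos r with h0 | h0
    · exact absurd (Nat.dvd_of_mod_eq_zero h0) hdvd
    · exact h0
  have hrK : r < K := Nat.mod_lt d hKpos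
  have hd : d = q * K + r := by rw [Nat.mul_comm]; exact (Nat.div_add_mod d K).symm
  have h1 : RURel A n (n + q * K) := hK.shift_mul hn q
  have h2 : RURel A (n + q * K) (n + q * K + r) := by
    have h2' := h1.symm.trans h
    rwa [show n + d = n + q * K + r by omega] at h2'
  set s := n + q * K with hs
  have hsN : N ≤ s := by omega
  obtain ⟨M, hM⟩ : ∃ M : ℕ, s * K = M := ⟨_, rfl⟩
  have hsM : s ≤ M := by
    have := Nat.le_mul_of_pos_right s hKpos
    omega
  set e := N + M - s with he
  have h3 : RURel A (s + e) (s + r + e) := h2.add (RURel.refl e)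
  rw [show s + e = N + M by omega, show s + r + e = N + M + r by omega] at h3
  have h4 : RURel A N (N + M) := by
    have h4' := hK.shift_mul (le_refl N) s
    rwa [hM] at h4'
  have h5 : RURel A (N + r) (N + M + r) := h4.add (RURel.refl r)
  have h6 : RURel A N (N + r) := ((h5.trans h3.symm).trans h4.symm).symm
  exact absurd (hmin r hrpos h6) (by omega)

end RU

/-- If `A` is a unital C*-algebra without Invariant Basis Number and with Basis
Type `(N, K)`, then for `n, m ≥ 1` there is an `n × m` rectangular unitary over
`A` iff `n = m`, or `n, m ≥ N` and `n ≡ m (mod K)`. -/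
theorem rectangularUnitary_iff_of_basisType
    (A : Type*) [NormedRing A] [StarRing A] [CStarRing A] [CompleteSpace A]
    [NormedAlgebra ℂ A] [StarModule ℂ A]
    (h : ¬ HasIBN A) (N K : ℕ) (hNK : IsBasisTypeOf A N K) :
    ∀ n m : ℕ, 1 ≤ n → 1 ≤ m →
      ((∃ U : Matrix (Fin n) (Fin m) A, IsRectangularUnitary U) ↔
        (n = m ∨ (N ≤ n ∧ N ≤ m ∧ n ≡ m [MOD K]))) := by
  
  have hK : RURel A N (N + K) := hNK.2.2.1
  have hKpos : 0 < K := hNK.2.1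
  have hmin : ∀ k : ℕ, 0 < k → RURel A N (N + k) → K ≤ k := hNK.2.2.2
  have hNmin := hNK.1.2.2
  intro n m hn hm
  constructor
  · intro hU
    have hR : RURel A n m := hU
    by_cases hnm : n = m
    · exact Or.inl hnm
    · have hNn : N ≤ n := hNmin n hn ⟨m, Ne.symm hnm, hU⟩
      have hNm : N ≤ m := hNmin m hm ⟨n, hnm, hR.symm⟩
      refine Or.inr ⟨hNn, hNm, ?_⟩
      rcases le_total n m with hle | hle
      · have hR' : RURel A n (n + (m - n)) := by
          rwa [show n + (m - n) = m by omega]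
        have hdvd : K ∣ m - n := hK.key hKpos hmin hNn hR'
        exact (Nat.modEq_iff_dvd' hle).mpr hdvd
      · have hR' : RURel A m (m + (n - m)) := by
          have := hR.symm
          rwa [show n = m + (n - m) by omega] at this
        have hdvd : K ∣ n - m := hK.key hKpos hmin hNm hR'
        exact ((Nat.modEq_iff_dvd' hle).mpr hdvd).symm
  · rintro (rfl | ⟨h1, h2, h3⟩)
    · exact RURel.refl n
    · rcases le_total n m with hle | hle
      · obtain ⟨t, ht⟩ := (Nat.modEq_iff_dvd' hle).mp h3
        have h4 : RURel A n (n + t * K) := hK.shift_mul h1 t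
        rwa [show n + t * K = m by rw [Nat.mul_comm]; omega] at h4
      · obtain ⟨t, ht⟩ := (Nat.modEq_iff_dvd' hle).mp h3.symm
        have h4 : RURel A m (m + t * K) := hK.shift_mul h2 t
        rw [show m + t * K = n by rw [Nat.mul_comm]; omega] at h4
        exact h4.symm
end

section
/- Let A be a unital C*-algebra without Invariant Basis Number, with Basis Type (N, K). Then for every integer k ≥ 1 the following are equivalent: (i) there exist r ≥ 1, a projection p in M_r(A), and an r × (r + k) matrix v over A with v * vᴴ = p and vᴴ * v = diag(p, 1_k) (block-diagonal); (ii) K divides k. (This is the matrix form of the statement that the order of [1_A]₀ in K₀(A) equals K.) -/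
open Matrix

section Aux

variable {A : Type*} [NormedRing A] [StarRing A] [CStarRing A] [CompleteSpace A]
  [NormedAlgebra ℂ A] [StarModule ℂ A]

private lemma mulConjTranspose_eq_zero {m n : Type*} [Fintype n]
    {x : Matrix m n A} (h : x * xᴴ = 0) : x = 0 := by
  letI : CStarAlgebra A :=
    { ‹NormedRing A›, ‹StarRing A›, ‹CStarRing A›, ‹NormedAlgebra ℂ A›,
      ‹StarModule ℂ A›, ‹CompleteSpace A› with }
  letI := CStarAlgebra.spectralOrder A
  haveI := CStarAlgebra.spectralOrderedRing A
  ext i j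
  have h1 : ∑ l, x i l * star (x i l) = 0 := by
    have := congrFun (congrFun h i) i
    simpa [Matrix.mul_apply, Matrix.conjTranspose_apply] using this
  have h2 := (Finset.sum_eq_zero_iff_of_nonneg
      (fun l _ => mul_star_self_nonneg (x i l))).1 h1 j (Finset.mem_univ j)
  rw [CStarRing.mul_star_self_eq_zero_iff] at h2
  simp [h2]

private lemma left_support {α β : Type*} [Fintype α] [Fintype β]
    {u : Matrix α β A} {e : Matrix α α A} (h : u * uᴴ = e) (he : e * e = e) :
    e * u = u := by
  have hes : eᴴ = e := by
    rw [← h, conjTranspose_mul, conjTranspose_conjTranspose]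
  have h1 : u * (uᴴ * e) = e := by rw [← Matrix.mul_assoc, h, he]
  have h2 : (e * u) * uᴴ = e := by rw [Matrix.mul_assoc, h, he]
  have h3 : (e * u) * (uᴴ * e) = e := by
    rw [Matrix.mul_assoc, h1, he]
  have key : (u - e * u) * (u - e * u)ᴴ = 0 := by
    rw [conjTranspose_sub, conjTranspose_mul, hes, Matrix.sub_mul,
      Matrix.mul_sub, Matrix.mul_sub, h, h1, h2, h3]
    simp
  have h4 := mulConjTranspose_eq_zero key
  have h5 := sub_eq_zero.mp h4
  exact h5.symm

private lemma right_support {α β : Type*} [Fintype α] [Fintype β]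
    {u : Matrix α β A} {f : Matrix β β A} (h : uᴴ * u = f) (hf : f * f = f) :
    u * f = u := by
  have hfs : fᴴ = f := by
    rw [← h, conjTranspose_mul, conjTranspose_conjTranspose]
  have h' : uᴴ * (uᴴ)ᴴ = f := by rwa [conjTranspose_conjTranspose]
  have h6 := left_support h' hf
  have h7 := congrArg Matrix.conjTranspose h6
  rwa [conjTranspose_mul, conjTranspose_conjTranspose, hfs] at h7

/-- Murray–von Neumann equivalence (as a relation on arbitrary matrices). -/
private def MvN {α β : Type*} [Fintype α] [Fintype β]
    (e : Matrix α α A) (f : Matrix β β A) : Prop :=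
  ∃ u : Matrix α β A, u * uᴴ = e ∧ uᴴ * u = f

private lemma mvn_refl {α : Type*} [Fintype α] {e : Matrix α α A}
    (hs : eᴴ = e) (he : e * e = e) : MvN e e :=
  ⟨e, by rw [hs, he], by rw [hs, he]⟩

private lemma mvn_trans {α β γ : Type*} [Fintype α] [Fintype β] [Fintype γ]
    {e : Matrix α α A} {f : Matrix β β A} {g : Matrix γ γ A}
    (he : e * e = e) (hg : g * g = g) (h1 : MvN e f) (h2 : MvN f g) :
    MvN e g := by
  obtain ⟨x, hx1, hx2⟩ := h1
  obtain ⟨y, hy1, hy2⟩ := h2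
  refine ⟨x * y, ?_, ?_⟩
  · simp only [conjTranspose_mul, Matrix.mul_assoc]
    rw [← Matrix.mul_assoc y yᴴ, hy1, ← hx2, Matrix.mul_assoc xᴴ x,
      ← Matrix.mul_assoc x xᴴ, hx1, he]
  · simp only [conjTranspose_mul, Matrix.mul_assoc]
    rw [← Matrix.mul_assoc xᴴ x, hx2, ← hy1, Matrix.mul_assoc y yᴴ,
      ← Matrix.mul_assoc yᴴ y, hy2, hg]

private lemma mvn_add {α β γ δ : Type*} [Fintype α] [Fintype β] [Fintype γ] [Fintype δ]
    {e : Matrix α α A} {f : Matrix β β A} {e' : Matrix γ γ A} {f' : Matrix δ δ A}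
    (h : MvN e f) (h' : MvN e' f') :
    MvN (fromBlocks e 0 0 e') (fromBlocks f 0 0 f') := by
  obtain ⟨u, hu1, hu2⟩ := h
  obtain ⟨w, hw1, hw2⟩ := h'
  refine ⟨fromBlocks u 0 0 w, ?_, ?_⟩
  · simp [fromBlocks_conjTranspose, fromBlocks_multiply, hu1, hw1]
  · simp [fromBlocks_conjTranspose, fromBlocks_multiply, hu2, hw2]

private lemma mvn_reindex_right {α β β' : Type*} [Fintype α] [Fintype β] [Fintype β']
    {e : Matrix α α A} {f : Matrix β β A} (σ : β' ≃ β) (h : MvN e f) :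
    MvN e (f.submatrix σ σ) := by
  obtain ⟨u, hu1, hu2⟩ := h
  refine ⟨u.submatrix id ⇑σ, ?_, ?_⟩
  · rw [conjTranspose_submatrix, Matrix.submatrix_mul_equiv u uᴴ id σ id,
      hu1, Matrix.submatrix_id_id]
  · rw [conjTranspose_submatrix]
    have h8 := Matrix.submatrix_mul_equiv uᴴ u (⇑σ) (Equiv.refl α) (⇑σ)
    simp only [Equiv.coe_refl] at h8
    rw [h8, hu2]

/-- The shuffling equivalence `(α ⊕ β) ⊕ κ ≃ (α ⊕ κ) ⊕ β`. -/
private def shuffle (α β κ : Type*) : (α ⊕ β) ⊕ κ ≃ (α ⊕ κ) ⊕ β where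
  toFun x := match x with
    | Sum.inl (Sum.inl a) => Sum.inl (Sum.inl a)
    | Sum.inl (Sum.inr b) => Sum.inr b
    | Sum.inr c => Sum.inl (Sum.inr c)
  invFun x := match x with
    | Sum.inl (Sum.inl a) => Sum.inl (Sum.inl a)
    | Sum.inl (Sum.inr c) => Sum.inr c
    | Sum.inr b => Sum.inl (Sum.inr b)
  left_inv x := by rcases x with (a | b) | c <;> rfl
  right_inv x := by rcases x with (a | c) | b <;> rfl

private lemma shuffle_submatrix {α β κ : Type*}
    (P : Matrix α α A) (Q : Matrix β β A) (R : Matrix κ κ A) :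
    (fromBlocks (fromBlocks P 0 0 R) 0 0 Q).submatrix
        (shuffle α β κ) (shuffle α β κ)
      = fromBlocks (fromBlocks P 0 0 Q) 0 0 R := by
  ext x y
  rcases x with (a | b) | c <;> rcases y with (a' | b') | c' <;>
    simp [shuffle, Matrix.submatrix_apply]

private lemma compress {α β γ δ : Type*} [Fintype α] [Fintype β] [Fintype γ] [Fintype δ]
    [DecidableEq α] [DecidableEq γ]
    (h : MvN (fromBlocks (1 : Matrix α α A) 0 0 (0 : Matrix β β A))
             (fromBlocks (1 : Matrix γ γ A) 0 0 (0 : Matrix δ δ A))) :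
    ∃ u : Matrix α γ A, u * uᴴ = 1 ∧ uᴴ * u = 1 := by
  obtain ⟨u, h1, h2⟩ := h
  have he : (fromBlocks (1 : Matrix α α A) 0 0 (0 : Matrix β β A)) *
      (fromBlocks 1 0 0 0) = fromBlocks 1 0 0 0 := by
    simp [fromBlocks_multiply]
  have hf : (fromBlocks (1 : Matrix γ γ A) 0 0 (0 : Matrix δ δ A)) *
      (fromBlocks 1 0 0 0) = fromBlocks 1 0 0 0 := by
    simp [fromBlocks_multiply]
  have hl := left_support h1 he
  have hr := right_support h2 hf
  obtain ⟨u11, u12, u21, u22, rfl⟩ :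
      ∃ a b c d, u = fromBlocks a b c d :=
    ⟨_, _, _, _, (fromBlocks_toBlocks u).symm⟩
  simp only [fromBlocks_multiply, Matrix.one_mul, Matrix.zero_mul, Matrix.mul_zero,
    Matrix.mul_one, add_zero, zero_add] at hl hr
  have h21 : u21 = 0 := by simpa using (congrArg Matrix.toBlocks₂₁ hl).symm
  have h12 : u12 = 0 := by simpa using (congrArg Matrix.toBlocks₁₂ hr).symm
  subst h21; subst h12
  simp only [fromBlocks_conjTranspose, conjTranspose_zero, fromBlocks_multiply,
    Matrix.mul_zero, Matrix.zero_mul, add_zero, zero_add] at h1 h2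
  have k1 : u11 * u11ᴴ = 1 := by simpa using congrArg Matrix.toBlocks₁₁ h1
  have k2 : u11ᴴ * u11 = 1 := by simpa using congrArg Matrix.toBlocks₁₁ h2
  exact ⟨u11, k1, k2⟩

variable (A) in
private def RelNat (a b : ℕ) : Prop :=
  ∃ U : Matrix (Fin a) (Fin b) A, IsRectangularUnitary U

private lemma relNat_of_unitary {α β : Type*} [Fintype α] [Fintype β]
    [DecidableEq α] [DecidableEq β] {a b : ℕ}
    (ea : α ≃ Fin a) (eb : β ≃ Fin b) (u : Matrix α β A)
    (h1 : u * uᴴ = 1) (h2 : uᴴ * u = 1) : RelNat A a b := by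
  refine ⟨u.submatrix ea.symm eb.symm, ?_, ?_⟩
  · rw [conjTranspose_submatrix, Matrix.submatrix_mul_equiv u uᴴ ⇑ea.symm eb.symm ⇑ea.symm,
      h1]
    exact Matrix.submatrix_one_equiv ea.symm
  · rw [conjTranspose_submatrix, Matrix.submatrix_mul_equiv uᴴ u ⇑eb.symm ea.symm ⇑eb.symm,
      h2]
    exact Matrix.submatrix_one_equiv eb.symm

private lemma relNat_refl (a : ℕ) : RelNat A a a :=
  ⟨1, by simp [IsRectangularUnitary]⟩

private lemma relNat_symm {a b : ℕ} (h : RelNat A a b) : RelNat A b a := by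
  obtain ⟨U, h1, h2⟩ := h
  exact ⟨Uᴴ, by rwa [conjTranspose_conjTranspose], by rwa [conjTranspose_conjTranspose]⟩

private lemma relNat_trans {a b c : ℕ} (h : RelNat A a b) (h' : RelNat A b c) :
    RelNat A a c := by
  obtain ⟨U, h1, h2⟩ := h
  obtain ⟨V, h3, h4⟩ := h'
  refine ⟨U * V, ?_, ?_⟩
  · rw [conjTranspose_mul, Matrix.mul_assoc, ← Matrix.mul_assoc V Vᴴ, h3,
      Matrix.one_mul, h1]
  · rw [conjTranspose_mul, Matrix.mul_assoc, ← Matrix.mul_assoc Uᴴ U, h2,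
      Matrix.one_mul, h4]

private lemma relNat_addRight {a b : ℕ} (t : ℕ) (h : RelNat A a b) :
    RelNat A (a + t) (b + t) := by
  obtain ⟨U, h1, h2⟩ := h
  refine relNat_of_unitary finSumFinEquiv finSumFinEquiv
    (fromBlocks U 0 0 (1 : Matrix (Fin t) (Fin t) A)) ?_ ?_
  · rw [fromBlocks_conjTranspose]
    simp [fromBlocks_multiply, h1, ← fromBlocks_one]
  · rw [fromBlocks_conjTranspose]
    simp [fromBlocks_multiply, h2, ← fromBlocks_one]

private lemma relNat_cast {a b a' b' : ℕ} (ha : a = a') (hb : b = b')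
    (h : RelNat A a b) : RelNat A a' b' := by subst ha; subst hb; exact h

end Aux

/-- Matrix form of `|[1_A]₀| = K`: if `A` is a unital C*-algebra without
Invariant Basis Number and with Basis Type `(N, K)`, then for every `k ≥ 1`
there exist `r ≥ 1`, a projection `p ∈ M_r(A)`, and an `r × (r + k)` matrix `v`
over `A` with `v * vᴴ = p` and `vᴴ * v = diag(p, 1_k)` if and only if `K ∣ k`. -/
theorem projection_stably_equiv_shift_iff_dvd
    (A : Type*) [NormedRing A] [StarRing A] [CStarRing A] [CompleteSpace A]
    [NormedAlgebra ℂ A] [StarModule ℂ A]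
    (h : ¬ HasIBN A) (N K : ℕ) (hNK : IsBasisTypeOf A N K) :
    ∀ k : ℕ, 1 ≤ k →
      ((∃ r : ℕ, 1 ≤ r ∧
          ∃ (p : Matrix (Fin r) (Fin r) A)
            (v : Matrix (Fin r) (Fin r ⊕ Fin k) A),
            pᴴ = p ∧ p * p = p ∧
            v * vᴴ = p ∧ vᴴ * v = Matrix.fromBlocks p 0 0 1) ↔ K ∣ k) := by
  obtain ⟨⟨hN0, -, -⟩, hK0, ⟨U0, hU0⟩, hKmin⟩ := hNK
  have hUK : RelNat A N (N + K) := ⟨U0, hU0⟩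
  -- iteration: RelNat N (N + j*K)
  have iter : ∀ j : ℕ, RelNat A N (N + j * K) := by
    intro j
    induction j with
    | zero => exact relNat_cast rfl (by ring) (relNat_refl N)
    | succ j ih =>
      refine relNat_trans ih ?_
      exact relNat_cast (by ring) (by ring) (relNat_addRight (j * K) hUK)
  -- lowering: RelNat a (a + t) → RelNat N (N + t)
  have lower : ∀ a t : ℕ, RelNat A a (a + t) → RelNat A N (N + t) := by
    intro a t ha
    have hle : a ≤ N + a * K := by
      have : a ≤ a * K := Nat.le_mul_of_pos_right a hK0
      omega
    set e := N + a * K - a with he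
    have heq : a + e = N + a * K := by omega
    have s1 : RelNat A N (a + e) := relNat_cast rfl heq.symm (iter a)
    have s2 : RelNat A (a + e) (a + t + e) :=
      relNat_cast rfl (by ring) (relNat_addRight e ha)
    have s3 : RelNat A (a + t + e) (N + t) := by
      have h1 := relNat_addRight t (relNat_symm (iter a))
      exact relNat_cast (by omega) rfl h1
    exact relNat_trans (relNat_trans s1 s2) s3
  -- divisibility from minimality of K
  have dvd_of : ∀ t : ℕ, RelNat A N (N + t) → K ∣ t := by
    intro t
    induction t using Nat.strong_induction_on with
    | _ t ih =>
      intro ht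
      rcases Nat.eq_zero_or_pos t with rfl | htpos
      · exact dvd_zero K
      · have hKt : K ≤ t := hKmin t htpos ht
        have step : RelNat A (N + t) (N + (t - K)) := by
          have h1 := relNat_addRight (t - K) (relNat_symm hUK)
          exact relNat_cast (by omega) rfl h1
        have ht' : RelNat A N (N + (t - K)) := relNat_trans ht step
        have hd : K ∣ (t - K) := ih (t - K) (by omega) ht'
        obtain ⟨c, hc⟩ := hd
        exact ⟨c + 1, by rw [Nat.mul_add, Nat.mul_one, ← hc]; omega⟩
  intro k hk
  constructor
  · rintro ⟨r, hr, p, v, hps, hpp, hv1, hv2⟩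
    -- build RelNat r (r + k) via the Murray–von Neumann argument
    set q : Matrix (Fin r) (Fin r) A := 1 - p with hqdef
    have hqs : qᴴ = q := by
      rw [hqdef, conjTranspose_sub, conjTranspose_one, hps]
    have hpq : p * q = 0 := by
      rw [hqdef, Matrix.mul_sub, Matrix.mul_one, hpp, sub_self]
    have hqp : q * p = 0 := by
      rw [hqdef, Matrix.sub_mul, Matrix.one_mul, hpp, sub_self]
    have hqq : q * q = q := by
      rw [hqdef, Matrix.mul_sub, Matrix.mul_one, Matrix.sub_mul, Matrix.one_mul, hpp]
      abel
    have hpq1 : p + q = 1 := by rw [hqdef]; abel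
    -- the partial isometry between diag(p,q) and diag(1,0)
    have mvn_w : MvN (fromBlocks p 0 0 q)
        (fromBlocks (1 : Matrix (Fin r) (Fin r) A) 0 0 (0 : Matrix (Fin r) (Fin r) A)) := by
      refine ⟨fromBlocks p 0 q 0, ?_, ?_⟩
      · rw [fromBlocks_conjTranspose]
        simp [fromBlocks_multiply, hpp, hqq, hps, hqs, hpq, hqp]
      · rw [fromBlocks_conjTranspose]
        simp [fromBlocks_multiply, hpp, hqq, hps, hqs, hpq1]
    have mvn_v : MvN p (fromBlocks p 0 0 (1 : Matrix (Fin k) (Fin k) A)) := ⟨v, hv1, hv2⟩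
    -- idempotency facts used in transitivity
    have hE : (fromBlocks (1 : Matrix (Fin r) (Fin r) A) 0 0 (0 : Matrix (Fin r) (Fin r) A)) *
        (fromBlocks 1 0 0 0) = fromBlocks 1 0 0 0 := by simp [fromBlocks_multiply]
    have hG : (fromBlocks (fromBlocks p 0 0 (1 : Matrix (Fin k) (Fin k) A)) 0 0 q) *
        (fromBlocks (fromBlocks p 0 0 1) 0 0 q) = fromBlocks (fromBlocks p 0 0 1) 0 0 q := by
      simp [fromBlocks_multiply, hpp, hqq]
    have hF1 : (fromBlocks (fromBlocks (1 : Matrix (Fin r) (Fin r) A) 0 0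
          (0 : Matrix (Fin r) (Fin r) A)) 0 0 (1 : Matrix (Fin k) (Fin k) A)) *
        (fromBlocks (fromBlocks 1 0 0 0) 0 0 1) = fromBlocks (fromBlocks 1 0 0 0) 0 0 1 := by
      simp [fromBlocks_multiply]
    -- the chain
    have c0 : MvN (fromBlocks (1 : Matrix (Fin r) (Fin r) A) 0 0 (0 : Matrix (Fin r) (Fin r) A))
        (fromBlocks p 0 0 q) := by
      obtain ⟨w, hw1, hw2⟩ := mvn_w
      exact ⟨wᴴ, by rwa [conjTranspose_conjTranspose], by rwa [conjTranspose_conjTranspose]⟩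
    have c1 : MvN (fromBlocks p 0 0 q)
        (fromBlocks (fromBlocks p 0 0 (1 : Matrix (Fin k) (Fin k) A)) 0 0 q) :=
      mvn_add mvn_v (mvn_refl hqs hqq)
    have c01 := mvn_trans hE hG c0 c1
    have c2 := mvn_reindex_right (shuffle (Fin r) (Fin r) (Fin k)) c01
    rw [shuffle_submatrix p q (1 : Matrix (Fin k) (Fin k) A)] at c2
    have c3 : MvN (fromBlocks (fromBlocks p 0 0 q) 0 0 (1 : Matrix (Fin k) (Fin k) A))
        (fromBlocks (fromBlocks (1 : Matrix (Fin r) (Fin r) A) 0 0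
          (0 : Matrix (Fin r) (Fin r) A)) 0 0 (1 : Matrix (Fin k) (Fin k) A)) :=
      mvn_add mvn_w (mvn_refl (conjTranspose_one) (Matrix.one_mul 1))
    have c4 := mvn_trans hE hF1 c2 c3
    have c5 := mvn_reindex_right (shuffle (Fin r) (Fin k) (Fin r)) c4
    rw [shuffle_submatrix (1 : Matrix (Fin r) (Fin r) A) (1 : Matrix (Fin k) (Fin k) A)
      (0 : Matrix (Fin r) (Fin r) A), fromBlocks_one] at c5
    obtain ⟨u, hu1, hu2⟩ := compress c5
    have hrel : RelNat A r (r + k) :=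
      relNat_of_unitary (Equiv.refl (Fin r)) finSumFinEquiv u hu1 hu2
    exact dvd_of k (lower r k hrel)
  · rintro ⟨m, rfl⟩
    have hrel : RelNat A N (N + K * m) := relNat_cast rfl (by ring) (iter m)
    obtain ⟨U, hU1, hU2⟩ := hrel
    refine ⟨N, hN0, 1, U.submatrix id ⇑finSumFinEquiv, conjTranspose_one, Matrix.one_mul 1,
      ?_, ?_⟩
    · rw [conjTranspose_submatrix, Matrix.submatrix_mul_equiv U Uᴴ id finSumFinEquiv id,
        hU1, Matrix.submatrix_id_id]
    · rw [conjTranspose_submatrix]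
      have h8 := Matrix.submatrix_mul_equiv Uᴴ U ⇑finSumFinEquiv (Equiv.refl (Fin N))
        ⇑finSumFinEquiv
      simp only [Equiv.coe_refl] at h8
      rw [h8, hU2, fromBlocks_one]
      exact Matrix.submatrix_one_equiv finSumFinEquiv
end
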